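/- arXiv:1612.08299 — 3 statements merged into one kernel-verified Lean document; each statement's English description precedes it below -/
import Mathlib

section
/- Let R > r > 0 and let γ(t) = (√(R² − r²)·cos t, r + R·sin t, r·cos t) be the Villarceau circle on the torus T with radii R, r. For each t, let m(t) = (−cos t · cos v(t), −cos t · sin v(t), sin t), where cos v(t) = √(R² − r²)·cos t/(R + r·sin t) and sin v(t) = (r + R·sin t)/(R + r·sin t); then m(t) is a unit tangent vector to the meridian circle of T through γ(t). The inner product ⟨γ'(t), m(t)⟩ equals −r for every t; since ‖γ'(t)‖ = R and ‖m(t)‖ = 1, the Villarceau circle crosses every meridian circle at the same constant angle, whose cosine has absolute value r/R. -/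
open Real

/-- The point `(x, y, z)` of Euclidean 3-space. -/
noncomputable def pt (x y z : ℝ) : EuclideanSpace ℝ (Fin 3) :=
  (WithLp.equiv 2 (Fin 3 → ℝ)).symm ![x, y, z]

/-- The torus of revolution with major radius `R` and minor radius `r`:
`T = {(x, y, z) : (√(x² + y²) − R)² + z² = r²}`. -/
def torus (R r : ℝ) : Set (EuclideanSpace ℝ (Fin 3)) :=
  {p | (Real.sqrt ((p 0) ^ 2 + (p 1) ^ 2) - R) ^ 2 + (p 2) ^ 2 = r ^ 2}

/-- The bitangent plane `P = {(x, y, z) : √(R² − r²)·z = r·x}`. -/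
def bitangentPlane (R r : ℝ) : Set (EuclideanSpace ℝ (Fin 3)) :=
  {p | Real.sqrt (R ^ 2 - r ^ 2) * p 2 = r * p 0}

/-- The Villarceau circle `γ(t) = (√(R² − r²)·cos t, r + R·sin t, r·cos t)`. -/
noncomputable def villarceau (R r : ℝ) (t : ℝ) : EuclideanSpace ℝ (Fin 3) :=
  pt (Real.sqrt (R ^ 2 - r ^ 2) * Real.cos t) (r + R * Real.sin t) (r * Real.cos t)

open RealInnerProductSpace

/-- The unit tangent vector `m(t) = (−cos t·cos v(t), −cos t·sin v(t), sin t)` to the meridian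
circle of the torus through `γ(t)`, where `cos v(t) = √(R² − r²)·cos t/(R + r·sin t)` and
`sin v(t) = (r + R·sin t)/(R + r·sin t)`. -/
noncomputable def meridianTangent (R r : ℝ) (t : ℝ) : EuclideanSpace ℝ (Fin 3) :=
  pt (-Real.cos t * (Real.sqrt (R ^ 2 - r ^ 2) * Real.cos t / (R + r * Real.sin t)))
     (-Real.cos t * ((r + R * Real.sin t) / (R + r * Real.sin t)))
     (Real.sin t)

lemma inner_pt (a b c d e f : ℝ) : ⟪pt a b c, pt d e f⟫ = a*d + b*e + c*f := by
  simp [pt, PiLp.inner_apply, Fin.sum_univ_three]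
  ring

lemma norm_pt (a b c : ℝ) : ‖pt a b c‖ = Real.sqrt (a^2 + b^2 + c^2) := by
  simp [pt, EuclideanSpace.norm_eq, Fin.sum_univ_three, sq]

lemma hasDerivAt_pt {a b c : ℝ → ℝ} {a' b' c' t : ℝ}
    (ha : HasDerivAt a a' t) (hb : HasDerivAt b b' t) (hc : HasDerivAt c c' t) :
    HasDerivAt (fun s => pt (a s) (b s) (c s)) (pt a' b' c') t := by
  have h : HasDerivAt (fun s => (![a s, b s, c s] : Fin 3 → ℝ)) ![a', b', c'] t := by
    rw [hasDerivAt_pi]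
    intro i
    fin_cases i
    · simpa using ha
    · simpa using hb
    · simpa using hc
  exact ((PiLp.continuousLinearEquiv 2 ℝ fun _ : Fin 3 => ℝ).symm.toContinuousLinearMap.hasFDerivAt.comp_hasDerivAt t h : _)

lemma deriv_villarceau (R r : ℝ) (t : ℝ) :
    deriv (villarceau R r) t =
      pt (Real.sqrt (R ^ 2 - r ^ 2) * (-Real.sin t)) (R * Real.cos t) (r * (-Real.sin t)) := by
  have h : HasDerivAt (villarceau R r)
      (pt (Real.sqrt (R ^ 2 - r ^ 2) * (-Real.sin t)) (R * Real.cos t) (r * (-Real.sin t))) t := by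
    apply hasDerivAt_pt
    · exact (Real.hasDerivAt_cos t).const_mul _
    · simpa using ((Real.hasDerivAt_sin t).const_mul R).const_add r
    · exact (Real.hasDerivAt_cos t).const_mul r
  exact h.deriv

/-- For `R > r > 0` and every `t`: the inner product `⟨γ'(t), m(t)⟩` equals `−r`; moreover
`‖γ'(t)‖ = R` and `‖m(t)‖ = 1`, so the Villarceau circle crosses every meridian circle at the
same constant angle, whose cosine has absolute value `r/R`. -/
theorem villarceau_meridian_angle (R r : ℝ) (hr : 0 < r) (hR : r < R) (t : ℝ) :
    ⟪deriv (villarceau R r) t, meridianTangent R r t⟫ = -r ∧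
    ‖deriv (villarceau R r) t‖ = R ∧
    ‖meridianTangent R r t‖ = 1 ∧
    |⟪deriv (villarceau R r) t, meridianTangent R r t⟫ /
        (‖deriv (villarceau R r) t‖ * ‖meridianTangent R r t‖)| = r / R := by
  have hR0 : (0:ℝ) < R := hr.trans hR
  set s := Real.sqrt (R ^ 2 - r ^ 2) with hs
  have hs2 : s ^ 2 = R ^ 2 - r ^ 2 := Real.sq_sqrt (by nlinarith)
  set D := R + r * Real.sin t with hD
  have hD0 : 0 < D := by nlinarith [Real.neg_one_le_sin t, Real.sin_le_one t]
  have hDne : D ≠ 0 := ne_of_gt hD0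
  have hpy : Real.sin t ^ 2 + Real.cos t ^ 2 = 1 := Real.sin_sq_add_cos_sq t
  rw [deriv_villarceau, meridianTangent]
  rw [show (R + r * Real.sin t) = D from rfl]
  have hInner : ⟪pt (s * -Real.sin t) (R * Real.cos t) (r * -Real.sin t),
      pt (-Real.cos t * (s * Real.cos t / D)) (-Real.cos t * ((r + R * Real.sin t) / D))
        (Real.sin t)⟫ = -r := by
    rw [inner_pt]
    field_simp
    linear_combination (Real.sin t * Real.cos t ^ 2) * hs2 + (-(r * D)) * hpy
      + (r * Real.cos t ^ 2) * hD
  have hNd : ‖pt (s * -Real.sin t) (R * Real.cos t) (r * -Real.sin t)‖ = R := by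
    rw [norm_pt]
    rw [show (s * -Real.sin t)^2 + (R * Real.cos t)^2 + (r * -Real.sin t)^2 = R^2 by nlinarith]
    exact Real.sqrt_sq hR0.le
  have hNm : ‖pt (-Real.cos t * (s * Real.cos t / D)) (-Real.cos t * ((r + R * Real.sin t) / D))
      (Real.sin t)‖ = 1 := by
    rw [norm_pt]
    rw [show (-Real.cos t * (s * Real.cos t / D))^2 + (-Real.cos t * ((r + R * Real.sin t) / D))^2
        + Real.sin t ^ 2 = 1 by
      field_simp
      linear_combination (Real.cos t ^ 4) * hs2 + (D ^ 2 + (R ^ 2 - r ^ 2) * Real.cos t ^ 2) * hpy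
        + (-(Real.cos t ^ 2) * (D + R + r * Real.sin t)) * hD]
    exact Real.sqrt_one
  refine ⟨hInner, hNd, hNm, ?_⟩
  rw [hInner, hNd, hNm, mul_one, abs_div, abs_neg, abs_of_pos hr, abs_of_pos hR0]
end

section
/- Let R > r > 0, let P = {(x, y, z) ∈ ℝ³ : √(R² − r²)·z = r·x} be the bitangent plane of the torus T with radii R, r, and let C₊ and C₋ be the two Villarceau circles, i.e. the circles of radius R in P centered at (0, r, 0) and (0, −r, 0). Then C₊ ∩ C₋ consists of exactly the two points (±(R² − r²)/R, 0, ±r√(R² − r²)/R), and these two points are precisely the points at which the plane P is tangent to the torus T. -/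
open Real

noncomputable def torusGrad (R : ℝ) (p : EuclideanSpace ℝ (Fin 3)) : EuclideanSpace ℝ (Fin 3) :=
  pt (2 * (Real.sqrt ((p 0) ^ 2 + (p 1) ^ 2) - R) * p 0 / Real.sqrt ((p 0) ^ 2 + (p 1) ^ 2))
     (2 * (Real.sqrt ((p 0) ^ 2 + (p 1) ^ 2) - R) * p 1 / Real.sqrt ((p 0) ^ 2 + (p 1) ^ 2))
     (2 * p 2)

lemma eq_pt_iff (p : EuclideanSpace ℝ (Fin 3)) (x y z : ℝ) :
    p = pt x y z ↔ p 0 = x ∧ p 1 = y ∧ p 2 = z := by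
  constructor
  · rintro rfl; exact ⟨rfl, rfl, rfl⟩
  · rintro ⟨h0, h1, h2⟩
    ext i
    fin_cases i <;> assumption

lemma smul_pt (l a b c : ℝ) : l • pt a b c = pt (l * a) (l * b) (l * c) := by
  ext i; fin_cases i <;> simp [pt]

lemma dist_pt_sq (p : EuclideanSpace ℝ (Fin 3)) (a b c R : ℝ) (hR : 0 ≤ R) :
    dist p (pt a b c) = R ↔ (p 0 - a)^2 + (p 1 - b)^2 + (p 2 - c)^2 = R^2 := by
  rw [EuclideanSpace.dist_eq]
  have h : ∑ i, dist (p i) (pt a b c i) ^ 2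
      = (p 0 - a)^2 + (p 1 - b)^2 + (p 2 - c)^2 := by
    simp only [Fin.sum_univ_three, Real.dist_eq, sq_abs]
    rfl
  rw [h]
  constructor
  · intro hsq
    rw [← hsq, Real.sq_sqrt]
    positivity
  · intro hsq
    rw [hsq, Real.sqrt_sq hR]

set_option maxHeartbeats 1000000 in
/-- For `R > r > 0`: the two Villarceau circles `C₊` and `C₋` (the circles of radius `R` in the
bitangent plane `P` centered at `(0, r, 0)` and `(0, −r, 0)`) intersect in exactly the two
points `(±(R² − r²)/R, 0, ±r·√(R² − r²)/R)`, and these two points are precisely the points of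
`T ∩ P` at which the plane `P` is tangent to the torus `T` (i.e. where the gradient of the
defining function of `T` is parallel to the normal `(−r, 0, √(R² − r²))` of `P`). -/
theorem villarceau_circles_tangency_points (R r : ℝ) (hr : 0 < r) (hR : r < R) :
    ({p | p ∈ bitangentPlane R r ∧ dist p (pt 0 r 0) = R} ∩
        {p | p ∈ bitangentPlane R r ∧ dist p (pt 0 (-r) 0) = R} : Set (EuclideanSpace ℝ (Fin 3))) =
      {pt ((R ^ 2 - r ^ 2) / R) 0 (r * Real.sqrt (R ^ 2 - r ^ 2) / R),
       pt (-((R ^ 2 - r ^ 2) / R)) 0 (-(r * Real.sqrt (R ^ 2 - r ^ 2) / R))} ∧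
    {p | p ∈ torus R r ∩ bitangentPlane R r ∧
        ∃ lam : ℝ, torusGrad R p = lam • pt (-r) 0 (Real.sqrt (R ^ 2 - r ^ 2))} =
      {pt ((R ^ 2 - r ^ 2) / R) 0 (r * Real.sqrt (R ^ 2 - r ^ 2) / R),
       pt (-((R ^ 2 - r ^ 2) / R)) 0 (-(r * Real.sqrt (R ^ 2 - r ^ 2) / R))} := by
  have hR0 : (0 : ℝ) < R := hr.trans hR
  obtain ⟨s, hs_def⟩ : ∃ s, Real.sqrt (R ^ 2 - r ^ 2) = s := ⟨_, rfl⟩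
  have hs0 : 0 < s := hs_def ▸ Real.sqrt_pos.mpr (by nlinarith)
  have hss : s ^ 2 = R ^ 2 - r ^ 2 := hs_def ▸ Real.sq_sqrt (by nlinarith)
  rw [hs_def]
  constructor
  · -- Part 1 : intersection of the two circles
    ext p
    simp only [Set.mem_inter_iff, Set.mem_setOf_eq, bitangentPlane, Set.mem_insert_iff,
      Set.mem_singleton_iff, dist_pt_sq _ _ _ _ _ hR0.le, eq_pt_iff, hs_def]
    constructor
    · rintro ⟨⟨hp, h2⟩, -, h3⟩
      have hy : p 1 = 0 := by nlinarith
      have hxz : p 0 ^ 2 + p 2 ^ 2 = R ^ 2 - r ^ 2 := by nlinarith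
      have hz2 : (p 2 * R - r * s) * (p 2 * R + r * s) = 0 := by
        linear_combination (s * p 2 + r * p 0) * hp + r ^ 2 * hxz + (-(r ^ 2) - p 2 ^ 2) * hss
      rcases mul_eq_zero.mp hz2 with hz | hz
      · left
        have hz' : p 2 = r * s / R := by field_simp; linarith
        have hx : r * (p 0 * R) = r * (R ^ 2 - r ^ 2) := by
          linear_combination (-R) * hp + s * hz + r * hss
        have hx' : p 0 = (R ^ 2 - r ^ 2) / R := by
          rw [eq_div_iff hR0.ne']
          exact mul_left_cancel₀ hr.ne' hx
        exact ⟨hx', hy, hz'⟩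
      · right
        have hz' : p 2 = -(r * s / R) := by field_simp; linarith
        have hx : r * (p 0 * R) = r * (-(R ^ 2 - r ^ 2)) := by
          linear_combination (-R) * hp + s * hz - r * hss
        have hx' : p 0 = -((R ^ 2 - r ^ 2) / R) := by
          have h := mul_left_cancel₀ hr.ne' hx
          field_simp
          linarith
        exact ⟨hx', hy, hz'⟩
    · rintro (⟨h0, h1, h2⟩ | ⟨h0, h1, h2⟩) <;> rw [h0, h1, h2]
      · refine ⟨⟨?_, ?_⟩, ?_, ?_⟩
        · field_simp; linear_combination hss
        · field_simp; linear_combination r ^ 2 * hss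
        · field_simp; linear_combination hss
        · field_simp; linear_combination r ^ 2 * hss
      · refine ⟨⟨?_, ?_⟩, ?_, ?_⟩
        · field_simp; linear_combination (-1) * hss
        · field_simp; linear_combination r ^ 2 * hss
        · field_simp; linear_combination (-1) * hss
        · field_simp; linear_combination r ^ 2 * hss
  · -- Part 2 : tangency points
    ext p
    simp only [Set.mem_setOf_eq, Set.mem_inter_iff, torus, bitangentPlane, Set.mem_insert_iff,
      Set.mem_singleton_iff, eq_pt_iff, hs_def]
    constructor
    · rintro ⟨⟨ht, hp⟩, lam, hg⟩
      rw [smul_pt, eq_pt_iff] at hg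
      obtain ⟨g0, g1, g2⟩ := hg
      rw [show torusGrad R p 0 = 2 * (Real.sqrt (p 0 ^ 2 + p 1 ^ 2) - R) * p 0 /
        Real.sqrt (p 0 ^ 2 + p 1 ^ 2) from rfl] at g0
      rw [show torusGrad R p 1 = 2 * (Real.sqrt (p 0 ^ 2 + p 1 ^ 2) - R) * p 1 /
        Real.sqrt (p 0 ^ 2 + p 1 ^ 2) from rfl] at g1
      rw [show torusGrad R p 2 = 2 * p 2 from rfl] at g2
      set ρ := Real.sqrt (p 0 ^ 2 + p 1 ^ 2) with hρ_def
      have hρ0 : 0 ≤ ρ := by rw [hρ_def]; exact Real.sqrt_nonneg _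
      have hρ2 : ρ ^ 2 = p 0 ^ 2 + p 1 ^ 2 := by
        rw [hρ_def]; exact Real.sq_sqrt (by positivity)
      clear_value ρ
      have hρpos : 0 < ρ := by
        rcases hρ0.lt_or_eq with h | h
        · exact h
        · exfalso; rw [← h] at ht; nlinarith
      rw [div_eq_iff hρpos.ne'] at g0 g1
      have hcase : (ρ - R) * p 1 = 0 := by
        have h : lam * 0 * ρ = 0 := by ring
        rw [h] at g1; linarith
      have hy : p 1 = 0 := by
        rcases mul_eq_zero.mp hcase with h | h
        · exfalso
          have hρR : ρ = R := by linarith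
          rw [hρR] at ht g0
          have hlam : lam = 0 := by
            have h2 : lam * (r * R) = 0 := by linarith [g0]
            rcases mul_eq_zero.mp h2 with h' | h'
            · exact h'
            · exact absurd h' (by positivity)
          rw [hlam] at g2
          nlinarith
        · exact h
      have hx0 : p 0 ≠ 0 := by
        intro h
        rw [h, hy] at hρ2
        nlinarith
      have key : p 0 * R * (ρ * R - s ^ 2) = 0 := by
        linear_combination (s ^ 2 / 2) * g0 + (s * r * ρ / 2) * g2 - r * ρ * hp -
          ρ * p 0 * hss
      have hρval : ρ * R = s ^ 2 := by
        rcases mul_eq_zero.mp key with h | h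
        · rcases mul_eq_zero.mp h with h' | h'
          · exact absurd h' hx0
          · exact absurd h' hR0.ne'
        · linarith
      have hz2 : (p 2 * R - r * s) * (p 2 * R + r * s) = 0 := by
        have ht' : (ρ * R - R ^ 2) ^ 2 + (p 2 * R) ^ 2 = r ^ 2 * R ^ 2 := by
          nlinarith [ht]
        rw [hρval] at ht'
        nlinarith [ht', hss]
      rcases mul_eq_zero.mp hz2 with hz | hz
      · left
        have hz' : p 2 = r * s / R := by field_simp; linarith
        have hx : r * (p 0 * R) = r * (R ^ 2 - r ^ 2) := by
          linear_combination (-R) * hp + s * hz + r * hss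
        have hx' : p 0 = (R ^ 2 - r ^ 2) / R := by
          rw [eq_div_iff hR0.ne']
          exact mul_left_cancel₀ hr.ne' hx
        exact ⟨hx', hy, hz'⟩
      · right
        have hz' : p 2 = -(r * s / R) := by field_simp; linarith
        have hx : r * (p 0 * R) = r * (-(R ^ 2 - r ^ 2)) := by
          linear_combination (-R) * hp + s * hz - r * hss
        have hx' : p 0 = -((R ^ 2 - r ^ 2) / R) := by
          have := mul_left_cancel₀ hr.ne' hx
          field_simp
          linarith
        exact ⟨hx', hy, hz'⟩
    · have hρposval : Real.sqrt (((R ^ 2 - r ^ 2) / R) ^ 2 + (0 : ℝ) ^ 2) = (R ^ 2 - r ^ 2) / R := by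
        rw [show ((R ^ 2 - r ^ 2) / R) ^ 2 + (0 : ℝ) ^ 2 = ((R ^ 2 - r ^ 2) / R) ^ 2 by ring]
        exact Real.sqrt_sq (le_of_lt (div_pos (by nlinarith) hR0))
      have hρnegval : Real.sqrt ((-((R ^ 2 - r ^ 2) / R)) ^ 2 + (0 : ℝ) ^ 2) = (R ^ 2 - r ^ 2) / R := by
        rw [show (-((R ^ 2 - r ^ 2) / R)) ^ 2 + (0 : ℝ) ^ 2 = ((R ^ 2 - r ^ 2) / R) ^ 2 by ring]
        exact Real.sqrt_sq (le_of_lt (div_pos (by nlinarith) hR0))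
      have hdiv : ((R ^ 2 - r ^ 2) / R) ≠ 0 := (div_pos (by nlinarith) hR0).ne'
      rintro (⟨h0, h1, h2⟩ | ⟨h0, h1, h2⟩)
      · refine ⟨⟨?_, ?_⟩, 2 * r / R, ?_⟩
        · show (Real.sqrt (p 0 ^ 2 + p 1 ^ 2) - R) ^ 2 + p 2 ^ 2 = r ^ 2
          rw [h0, h1, h2, hρposval]
          field_simp
          nlinarith [hss]
        · rw [h0, h2]
          field_simp
          linear_combination hss
        · rw [smul_pt, eq_pt_iff]
          refine ⟨?_, ?_, ?_⟩
          · show 2 * (Real.sqrt (p 0 ^ 2 + p 1 ^ 2) - R) * p 0 /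
              Real.sqrt (p 0 ^ 2 + p 1 ^ 2) = 2 * r / R * (-r)
            rw [h0, h1, hρposval, div_eq_iff hdiv]
            field_simp
            ring
          · show 2 * (Real.sqrt (p 0 ^ 2 + p 1 ^ 2) - R) * p 1 /
              Real.sqrt (p 0 ^ 2 + p 1 ^ 2) = 2 * r / R * 0
            rw [h0, h1, hρposval]
            simp
          · show 2 * p 2 = 2 * r / R * s
            rw [h2]; ring
      · refine ⟨⟨?_, ?_⟩, -(2 * r / R), ?_⟩
        · show (Real.sqrt (p 0 ^ 2 + p 1 ^ 2) - R) ^ 2 + p 2 ^ 2 = r ^ 2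
          rw [h0, h1, h2, hρnegval]
          field_simp
          nlinarith [hss]
        · rw [h0, h2]
          field_simp
          linear_combination (-1) * hss
        · rw [smul_pt, eq_pt_iff]
          refine ⟨?_, ?_, ?_⟩
          · show 2 * (Real.sqrt (p 0 ^ 2 + p 1 ^ 2) - R) * p 0 /
              Real.sqrt (p 0 ^ 2 + p 1 ^ 2) = -(2 * r / R) * (-r)
            rw [h0, h1, hρnegval, div_eq_iff hdiv]
            field_simp
            ring
          · show 2 * (Real.sqrt (p 0 ^ 2 + p 1 ^ 2) - R) * p 1 /
              Real.sqrt (p 0 ^ 2 + p 1 ^ 2) = -(2 * r / R) * 0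
            rw [h0, h1, hρnegval]
            simp
          · show 2 * p 2 = -(2 * r / R) * s
            rw [h2]; ring
end

section
/- Define F : ℝ³ → ℝ by F(x, y, z) = 8(x⁴ + y⁴ + z⁴) − 8(x² + y² + z²) + 3. The set of singular points of the contour surface S(−1) = {p : F(p) = −1}, i.e. points p with F(p) = −1 and ∇F(p) = 0, consists of exactly twelve points: (±1/√2, ±1/√2, 0), (±1/√2, 0, ±1/√2), and (0, ±1/√2, ±1/√2), with all sign choices independent. (These are the twelve nodes of S(−1), corresponding to the edges of a cube.) -/
/-!
Each coordinate of a critical point of `F` is a root of `16 t (2t² − 1)`, so lies in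
`{0, ±1/√2}`. The quartic part `8t⁴ − 8t²` of `F` vanishes at `0` and equals `−2` at `±1/√2`,
so at a critical point `F = 3 − 2k`, with `k` the number of nonzero coordinates.
Hence `F = −1` exactly when two coordinates are `±1/√2` and the third is `0`.
-/

open Real

/-- The Chmutov polynomial `F(x, y, z) = 8(x⁴ + y⁴ + z⁴) − 8(x² + y² + z²) + 3`. -/
def chmutov (p : ℝ × ℝ × ℝ) : ℝ :=
  8 * (p.1 ^ 4 + p.2.1 ^ 4 + p.2.2 ^ 4) - 8 * (p.1 ^ 2 + p.2.1 ^ 2 + p.2.2 ^ 2) + 3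

/-- The gradient `∇F(x, y, z) = (32x³ − 16x, 32y³ − 16y, 32z³ − 16z)` of the Chmutov
polynomial. -/
def chmutovGrad (p : ℝ × ℝ × ℝ) : ℝ × ℝ × ℝ :=
  (32 * p.1 ^ 3 - 16 * p.1, 32 * p.2.1 ^ 3 - 16 * p.2.1, 32 * p.2.2 ^ 3 - 16 * p.2.2)

def chmutovQuartic (t : ℝ) : ℝ := 8 * t ^ 4 - 8 * t ^ 2

lemma chmutov_eq_sum_chmutovQuartic (x y z : ℝ) :
    chmutov (x, y, z) = chmutovQuartic x + chmutovQuartic y + chmutovQuartic z + 3 := by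
  simp only [chmutov, chmutovQuartic]
  ring

lemma one_div_sqrt_two_sq : (1 / √2) ^ 2 = 1 / 2 := by
  rw [div_pow, sq_sqrt] <;> norm_num

lemma chmutovQuartic_zero : chmutovQuartic 0 = 0 := by
  norm_num [chmutovQuartic]

lemma chmutovQuartic_neg (t : ℝ) : chmutovQuartic (-t) = chmutovQuartic t := by
  unfold chmutovQuartic
  ring

lemma chmutovQuartic_one_div_sqrt_two : chmutovQuartic (1 / √2) = -2 := by
  rw [chmutovQuartic, show 4 = 2 * 2 from rfl, pow_mul, one_div_sqrt_two_sq]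
  norm_num

lemma cubic_eq_zero_iff (t : ℝ) :
    32 * t ^ 3 - 16 * t = 0 ↔ t = 0 ∨ t = 1 / √2 ∨ t = -(1 / √2) := by
  have factor : 32 * t ^ 3 - 16 * t = 32 * t * ((t - 1 / √2) * (t + 1 / √2)) := by
    linear_combination 32 * t * one_div_sqrt_two_sq
  simp only [factor, mul_eq_zero, sub_eq_zero, add_eq_zero_iff_eq_neg]
  norm_num

/-- The set of singular points of the contour surface `S(−1) = {p : F(p) = −1}` of the Chmutov
polynomial consists of exactly twelve points: `(±1/√2, ±1/√2, 0)`, `(±1/√2, 0, ±1/√2)` and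
`(0, ±1/√2, ±1/√2)`, with all sign choices independent — the twelve nodes of `S(−1)`,
corresponding to the edges of a cube. -/
theorem chmutov_nodes_Sneg1 :
    {p : ℝ × ℝ × ℝ | chmutov p = -1 ∧ chmutovGrad p = 0} =
      ({(1 / Real.sqrt 2, 1 / Real.sqrt 2, 0), (1 / Real.sqrt 2, -(1 / Real.sqrt 2), 0),
        (-(1 / Real.sqrt 2), 1 / Real.sqrt 2, 0), (-(1 / Real.sqrt 2), -(1 / Real.sqrt 2), 0),
        (1 / Real.sqrt 2, 0, 1 / Real.sqrt 2), (1 / Real.sqrt 2, 0, -(1 / Real.sqrt 2)),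
        (-(1 / Real.sqrt 2), 0, 1 / Real.sqrt 2), (-(1 / Real.sqrt 2), 0, -(1 / Real.sqrt 2)),
        (0, 1 / Real.sqrt 2, 1 / Real.sqrt 2), (0, 1 / Real.sqrt 2, -(1 / Real.sqrt 2)),
        (0, -(1 / Real.sqrt 2), 1 / Real.sqrt 2), (0, -(1 / Real.sqrt 2), -(1 / Real.sqrt 2))} :
        Set (ℝ × ℝ × ℝ)) := by
  ext ⟨x, y, z⟩
  simp only [Set.mem_ofPred_eq, chmutovGrad, Prod.mk_eq_zero, cubic_eq_zero_iff,
    chmutov_eq_sum_chmutovQuartic, Set.mem_insert_iff, Set.mem_singleton_iff, Prod.mk.injEq]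
  constructor
  · rintro ⟨hF, hx, hy, hz⟩
    rcases hx with rfl | rfl | rfl <;> rcases hy with rfl | rfl | rfl <;>
      rcases hz with rfl | rfl | rfl <;>
      simp only [chmutovQuartic_zero, chmutovQuartic_neg, chmutovQuartic_one_div_sqrt_two] at hF <;>
      norm_num at hF <;> simp
  · rintro (⟨rfl, rfl, rfl⟩ | ⟨rfl, rfl, rfl⟩ | ⟨rfl, rfl, rfl⟩ | ⟨rfl, rfl, rfl⟩ |
      ⟨rfl, rfl, rfl⟩ | ⟨rfl, rfl, rfl⟩ | ⟨rfl, rfl, rfl⟩ | ⟨rfl, rfl, rfl⟩ |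
      ⟨rfl, rfl, rfl⟩ | ⟨rfl, rfl, rfl⟩ | ⟨rfl, rfl, rfl⟩ | ⟨rfl, rfl, rfl⟩) <;>
    simp only [chmutovQuartic_zero, chmutovQuartic_neg, chmutovQuartic_one_div_sqrt_two] <;>
    norm_num
end
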